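/- If τ is a TSO witness for an attack A = (attacker, stinst, ldinst) in a parallel program P, with delayed store action st and load action ld as in the witness shape, then the trace Tr(τ) contains the happens-before cycle st po+ ld hb+ st; consequently P is not robust. -/

import Mathlib

set_option maxHeartbeats 1000000
set_option linter.unusedVariables false

namespace TSORob

attribute [local instance 10] Classical.propDecidable

noncomputable section

variable {Tid Lbl D : Type}

/-! ### Actions -/

/-- Actions: issue, store, load, and local actions (the latter covering
assignments, asserts and fences). -/
inductive Act (Tid D : Type) : Type where
  | issue (t : Tid)
  | store (t : Tid) (a v : D)
  | load  (t : Tid) (a v : D)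
  | loc   (t : Tid)

namespace Act

def thread : Act Tid D → Tid
  | .issue t => t
  | .store t _ _ => t
  | .load t _ _ => t
  | .loc t => t

def isStore : Act Tid D → Prop
  | .store _ _ _ => True
  | _ => False

def isIssue : Act Tid D → Prop
  | .issue _ => True
  | _ => False

def isLoad : Act Tid D → Prop
  | .load _ _ _ => True
  | _ => False

end Act

/-! ### Positions, matching of issues and stores, trace nodes -/

/-- Number of actions satisfying `p` among the first `i` actions of `τ`. -/
def cntP (τ : List (Act Tid D)) (p : Act Tid D → Prop) (i : ℕ) : ℕ :=
  ((τ.take i).filter fun a => decide (p a)).length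

/-- Position of the `k`-th (0-based) action of `τ` satisfying `p`. -/
def posOfNth (τ : List (Act Tid D)) (p : Act Tid D → Prop) (k : ℕ) : Option ℕ :=
  ((List.range τ.length).filter fun i => decide (∃ a, τ[i]? = some a ∧ p a))[k]?

def isStoreOf (t : Tid) (x : Act Tid D) : Prop := x.isStore ∧ x.thread = t
def isIssueOf (t : Tid) (x : Act Tid D) : Prop := x.isIssue ∧ x.thread = t

/-- Position of the issue action corresponding to the store action at position `j`
(the `k`-th store action of a thread corresponds to its `k`-th issue action, as
buffers are FIFO). -/
def issueOfStore (τ : List (Act Tid D)) (j : ℕ) : Option ℕ :=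
  match τ[j]? with
  | some (.store t _ _) => posOfNth τ (isIssueOf t) (cntP τ (isStoreOf t) j)
  | _ => none

/-- Position of the store action corresponding to the issue action at position `i`. -/
def storeOfIssue (τ : List (Act Tid D)) (i : ℕ) : Option ℕ :=
  match τ[i]? with
  | some (.issue t) => posOfNth τ (isStoreOf t) (cntP τ (isIssueOf t) i)
  | _ => none

/-- Rank of the action at position `i` among non-store actions of its thread.
In the trace, an issue and its store form one node; nodes of a thread are
identified by this rank. -/
def rankAt (τ : List (Act Tid D)) (i : ℕ) : ℕ :=
  match τ[i]? with
  | some a => cntP τ (fun x => x.thread = a.thread ∧ ¬ x.isStore) i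
  | none => 0

/-- The trace node corresponding to the action at position `i` of `τ`: a pair of
the thread and the rank of the node in the thread's program order. A store
action yields the node of its issue action. -/
def nodeAt (τ : List (Act Tid D)) (i : ℕ) : Option (Tid × ℕ) :=
  match τ[i]? with
  | some (.store t _ _) => (issueOfStore τ i).map fun p => (t, rankAt τ p)
  | some a => some (a.thread, rankAt τ i)
  | none => none

/-- Relabel the issue actions of a per-thread action sequence by the
corresponding store actions (given in FIFO order) and drop the store actions:
this yields the per-thread node labels of the trace. -/
def mergeStores : List (Act Tid D) → List (Act Tid D) → List (Act Tid D)
  | [], _ => []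
  | .issue t :: rest, stores => stores.headD (.issue t) :: mergeStores rest stores.tail
  | .store _ _ _ :: rest, stores => mergeStores rest stores
  | .load t a v :: rest, stores => .load t a v :: mergeStores rest stores
  | .loc t :: rest, stores => .loc t :: mergeStores rest stores

/-- The sequence of node labels of thread `t` in the trace of `τ`. -/
def threadNodes (τ : List (Act Tid D)) (t : Tid) : List (Act Tid D) :=
  mergeStores (τ.filter fun a => decide (a.thread = t)) (τ.filter fun a => decide (isStoreOf t a))

/-! ### Traces -/

/-- A trace: per-thread node labels (program order is the per-thread order of
issuing, i.e. the order of the lists), a store order `so` and a source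
relation `src` on nodes.  A node is a pair (thread, rank in the thread). -/
structure Trace (Tid D : Type) where
  lab : Tid → List (Act Tid D)
  so : Tid × ℕ → Tid × ℕ → Prop
  src : Tid × ℕ → Tid × ℕ → Prop

namespace Trace

def labAt (T : Trace Tid D) (n : Tid × ℕ) : Option (Act Tid D) := (T.lab n.1)[n.2]?

/-- Program order: per-thread total order in which actions were issued. -/
def po (T : Trace Tid D) (m n : Tid × ℕ) : Prop :=
  m.1 = n.1 ∧ m.2 < n.2 ∧ n.2 < (T.lab n.1).length

/-- Conflict relation: a load conflicts with a store that overwrites the value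
the load reads (including the case where the load reads the initial value). -/
def cf (T : Trace Tid D) (m n : Tid × ℕ) : Prop :=
  ∃ a, (∃ t v, T.labAt m = some (.load t a v)) ∧ (∃ t v, T.labAt n = some (.store t a v)) ∧
    ((∃ p, T.src p m ∧ T.so p n) ∨ ¬ ∃ p, T.src p m)

/-- The happens-before relation `hb = po ∪ so ∪ src ∪ cf`. -/
def hb (T : Trace Tid D) (m n : Tid × ℕ) : Prop :=
  T.po m n ∨ T.so m n ∨ T.src m n ∨ T.cf m n

/-- Acyclicity of a relation. -/
def Acyclic (r : α → α → Prop) : Prop := ¬ ∃ x, Relation.TransGen r x x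

end Trace

/-- Store order of a computation: per-address total order of the store actions. -/
def soRel (τ : List (Act Tid D)) (m n : Tid × ℕ) : Prop :=
  ∃ i j a, i < j ∧ (∃ t v, τ[i]? = some (.store t a v)) ∧ (∃ t v, τ[j]? = some (.store t a v)) ∧
    nodeAt τ i = some m ∧ nodeAt τ j = some n

/-- At position `p`, position `i` is a pending (issued but not yet flushed)
issue of thread `t` with address `a`. -/
def pendingIssue (τ : List (Act Tid D)) (t : Tid) (a : D) (p i : ℕ) : Prop :=
  i < p ∧ τ[i]? = some (Act.issue t) ∧
  ∃ j v, storeOfIssue τ i = some j ∧ p < j ∧ τ[j]? = some (.store t a v)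

/-- Source relation of a computation: each load reads either (early) from the
latest pending buffered store of its own thread to its address, or else from
the latest store action to its address that was flushed to memory before it. -/
def srcRel (τ : List (Act Tid D)) (m n : Tid × ℕ) : Prop :=
  ∃ p t a v, τ[p]? = some (.load t a v) ∧ nodeAt τ p = some n ∧
    ((∃ i, pendingIssue τ t a p i ∧ (∀ i', pendingIssue τ t a p i' → i' ≤ i) ∧
        nodeAt τ i = some m) ∨
     ((¬ ∃ i, pendingIssue τ t a p i) ∧
      ∃ j, j < p ∧ (∃ t' v', τ[j]? = some (.store t' a v')) ∧
        (∀ j', j' < p → (∃ t' v', τ[j']? = some (.store t' a v')) → j' ≤ j) ∧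
        nodeAt τ j = some m))

/-- The trace of a computation. -/
def traceOf (τ : List (Act Tid D)) : Trace Tid D :=
  ⟨fun t => threadNodes τ t, soRel τ, srcRel τ⟩


/-- Instructions: loads, stores, memory fences, local assignments, asserts
(and atomic test-and-set, i.e. a locked instruction).  Expressions are
functions of the register valuation. -/
inductive Instr (D : Type) : Type where
  | load   (r : ℕ) (ae : (ℕ → D) → D)
  | store  (ae ve : (ℕ → D) → D)
  | mfence
  | assign (r : ℕ) (e : (ℕ → D) → D)
  | assert (e : (ℕ → D) → D)
  | tas    (r : ℕ) (ae ve : (ℕ → D) → D)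

/-- A labelled instruction `l : instr; goto l'`. -/
structure LInstr (Lbl D : Type) : Type where
  src : Lbl
  ins : Instr D
  dst : Lbl

/-- A thread: declared registers `0, …, nregs-1`, an initial label, and a
finite list of labelled instructions (several instructions may share a label,
giving branching). -/
structure ThreadCode (Lbl D : Type) : Type where
  nregs : ℕ
  init : Lbl
  code : List (LInstr Lbl D)

/-- A parallel program: a finite family of threads. -/
structure Program (Tid Lbl D : Type) : Type where
  threads : Tid → ThreadCode Lbl D

/-! ### TSO semantics -/

/-- A TSO configuration: program counters, memory, per-thread registers and
per-thread FIFO store buffers of address–value pairs. -/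
structure Conf (Tid Lbl D : Type) : Type where
  pc : Tid → Lbl
  mem : D → D
  regs : Tid → ℕ → D
  buf : Tid → List (D × D)

/-- Pointwise function update. -/
def updf {α β : Type _} (f : α → β) (x : α) (b : β) : α → β :=
  fun y => if y = x then b else f y

/-- The value for address `a` held by the latest buffered store in `β`, if any. -/
def bufVal (β : List (D × D)) (a : D) : Option D :=
  ((β.filter fun p => decide (p.1 = a)).getLast?).map Prod.snd

/-- The initial configuration: initial labels, all registers and addresses
hold `0`, all buffers are empty. -/
def initConf [Zero D] (P : Program Tid Lbl D) : Conf Tid Lbl D :=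
  ⟨fun t => (P.threads t).init, fun _ => 0, fun _ _ => 0, fun _ => []⟩

/-- Events: actions annotated with the instruction that generated them
(flushes of the buffer carry no instruction). -/
abbrev Ev (Tid Lbl D : Type) : Type := Act Tid D × Option (LInstr Lbl D)

/-- The TSO transition relation.  A step emits a list of events. -/
inductive Step [Zero D] (P : Program Tid Lbl D) :
    Conf Tid Lbl D → List (Ev Tid Lbl D) → Conf Tid Lbl D → Prop where
  | loadBuf (c : Conf Tid Lbl D) (t : Tid) (li : LInstr Lbl D) (r : ℕ)
      (ae : (ℕ → D) → D) (a v : D) :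
      li ∈ (P.threads t).code → c.pc t = li.src → li.ins = .load r ae →
      a = ae (c.regs t) → bufVal (c.buf t) a = some v →
      Step P c [(.load t a v, some li)]
        ⟨updf c.pc t li.dst, c.mem, updf c.regs t (updf (c.regs t) r v), c.buf⟩
  | loadMem (c : Conf Tid Lbl D) (t : Tid) (li : LInstr Lbl D) (r : ℕ)
      (ae : (ℕ → D) → D) (a v : D) :
      li ∈ (P.threads t).code → c.pc t = li.src → li.ins = .load r ae →
      a = ae (c.regs t) → bufVal (c.buf t) a = none → v = c.mem a →
      Step P c [(.load t a v, some li)]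
        ⟨updf c.pc t li.dst, c.mem, updf c.regs t (updf (c.regs t) r v), c.buf⟩
  | storeIssue (c : Conf Tid Lbl D) (t : Tid) (li : LInstr Lbl D)
      (ae ve : (ℕ → D) → D) (a v : D) :
      li ∈ (P.threads t).code → c.pc t = li.src → li.ins = .store ae ve →
      a = ae (c.regs t) → v = ve (c.regs t) →
      Step P c [(.issue t, some li)]
        ⟨updf c.pc t li.dst, c.mem, c.regs, updf c.buf t (c.buf t ++ [(a, v)])⟩
  | flush (c : Conf Tid Lbl D) (t : Tid) (a v : D) (β : List (D × D)) :
      c.buf t = (a, v) :: β →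
      Step P c [(.store t a v, none)]
        ⟨c.pc, updf c.mem a v, c.regs, updf c.buf t β⟩
  | fence (c : Conf Tid Lbl D) (t : Tid) (li : LInstr Lbl D) :
      li ∈ (P.threads t).code → c.pc t = li.src → li.ins = .mfence →
      c.buf t = [] →
      Step P c [(.loc t, some li)] ⟨updf c.pc t li.dst, c.mem, c.regs, c.buf⟩
  | assign (c : Conf Tid Lbl D) (t : Tid) (li : LInstr Lbl D) (r : ℕ)
      (e : (ℕ → D) → D) :
      li ∈ (P.threads t).code → c.pc t = li.src → li.ins = .assign r e →
      Step P c [(.loc t, some li)]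
        ⟨updf c.pc t li.dst, c.mem, updf c.regs t (updf (c.regs t) r (e (c.regs t))), c.buf⟩
  | assert (c : Conf Tid Lbl D) (t : Tid) (li : LInstr Lbl D) (e : (ℕ → D) → D) :
      li ∈ (P.threads t).code → c.pc t = li.src → li.ins = .assert e →
      e (c.regs t) ≠ 0 →
      Step P c [(.loc t, some li)] ⟨updf c.pc t li.dst, c.mem, c.regs, c.buf⟩
  | tas (c : Conf Tid Lbl D) (t : Tid) (li : LInstr Lbl D) (r : ℕ)
      (ae ve : (ℕ → D) → D) (a vold vnew : D) :
      li ∈ (P.threads t).code → c.pc t = li.src → li.ins = .tas r ae ve →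
      c.buf t = [] → a = ae (c.regs t) → vold = c.mem a → vnew = ve (c.regs t) →
      Step P c [(.load t a vold, some li), (.issue t, some li), (.store t a vnew, some li)]
        ⟨updf c.pc t li.dst, updf c.mem a vnew, updf c.regs t (updf (c.regs t) r vold), c.buf⟩

/-- Reflexive-transitive closure of `Step`, concatenating the emitted events. -/
inductive Steps [Zero D] (P : Program Tid Lbl D) :
    Conf Tid Lbl D → List (Ev Tid Lbl D) → Conf Tid Lbl D → Prop where
  | refl (c : Conf Tid Lbl D) : Steps P c [] c
  | trans (c₁ : Conf Tid Lbl D) (ρ₁ : List (Ev Tid Lbl D)) (c₂ : Conf Tid Lbl D)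
      (ρ₂ : List (Ev Tid Lbl D)) (c₃ : Conf Tid Lbl D) :
      Step P c₁ ρ₁ c₂ → Steps P c₂ ρ₂ c₃ → Steps P c₁ (ρ₁ ++ ρ₂) c₃

/-- A run of `P` from the initial configuration. -/
def Run [Zero D] (P : Program Tid Lbl D) (ρ : List (Ev Tid Lbl D)) (c : Conf Tid Lbl D) : Prop :=
  Steps P (initConf P) ρ c

/-- The action sequence of an annotated run. -/
def acts (ρ : List (Ev Tid Lbl D)) : List (Act Tid D) := ρ.map Prod.fst

/-- TSO computations: action sequences leading from the initial configuration
to a configuration in which all buffers are empty. -/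
def TSOComput [Zero D] (P : Program Tid Lbl D) (τ : List (Act Tid D)) : Prop :=
  ∃ ρ c, Run P ρ c ∧ acts ρ = τ ∧ ∀ t, c.buf t = []

/-- SC shape: every issue action is immediately followed by its store action
(no buffering).  TSO computations of this shape are exactly the SC
computations; fences then have no effect since buffers are always empty. -/
def SCshape (τ : List (Act Tid D)) : Prop :=
  ∀ i t, τ[i]? = some (.issue t) → ∃ a v, τ[i + 1]? = some (.store t a v)

/-- SC computations. -/
def SCComput [Zero D] (P : Program Tid Lbl D) (τ : List (Act Tid D)) : Prop :=
  TSOComput P τ ∧ SCshape τ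

def TSOTraces [Zero D] (P : Program Tid Lbl D) : Set (Trace Tid D) :=
  {T | ∃ τ, TSOComput P τ ∧ traceOf τ = T}

def SCTraces [Zero D] (P : Program Tid Lbl D) : Set (Trace Tid D) :=
  {T | ∃ τ, SCComput P τ ∧ traceOf τ = T}

/-- TSO robustness: the TSO traces coincide with the SC traces. -/
def Robust [Zero D] (P : Program Tid Lbl D) : Prop := TSOTraces P = SCTraces P

/-! ### Delays, violations -/

/-- Number of actions of thread `t` strictly between positions `i` and `j`. -/
def distBetween (τ : List (Act Tid D)) (t : Tid) (i j : ℕ) : ℕ :=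
  (((τ.take j).drop (i + 1)).filter fun a => decide (a.thread = t)).length

/-- The delay of the store action at position `j`: the distance between it and
its issue action. -/
def storeDelay (τ : List (Act Tid D)) (j : ℕ) : ℕ :=
  match τ[j]? with
  | some (.store t _ _) =>
      match issueOfStore τ j with
      | some i => distBetween τ t i j
      | none => 0
  | _ => 0

/-- The number of delays of a computation: the sum of the distances between
corresponding issue and store actions. -/
def delays (τ : List (Act Tid D)) : ℕ :=
  ((List.range τ.length).map (storeDelay τ)).sum

/-- A violating TSO computation: its trace is not an SC trace of the program. -/
def Violating [Zero D] (P : Program Tid Lbl D) (τ : List (Act Tid D)) : Prop :=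
  TSOComput P τ ∧ traceOf τ ∉ SCTraces P

/-- A minimal violation: a violating computation with the minimal number of
delays among all violating computations of `P`. -/
def MinViolation [Zero D] (P : Program Tid Lbl D) (τ : List (Act Tid D)) : Prop :=
  Violating P τ ∧ ∀ τ', Violating P τ' → delays τ ≤ delays τ'

/-! ### Happens-before through an infix -/

/-- One step of a happens-before path between positions of a computation:
the two positions denote nodes related by `hb` or by `po⁺` (an issue and its
corresponding store action denote the same node, which covers the issue
relation). -/
def hbStep (τ : List (Act Tid D)) (p q : ℕ) : Prop :=
  ∃ m n, nodeAt τ p = some m ∧ nodeAt τ q = some n ∧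
    (m = n ∨ (traceOf τ).hb m n ∨ Relation.TransGen (traceOf τ).po m n)

/-- `a` happens-before `b` through `β` (for `τ = α·a·β·b·γ`, `i` the position
of `a`, `j` the position of `b`): there is a subsequence `c₁ … cₙ` of `β`
such that consecutive elements of `a·c₁ … cₙ·b` are related by `hb ∪ po⁺`. -/
def hbThrough (τ : List (Act Tid D)) (i j : ℕ) : Prop :=
  ∃ l : List ℕ, List.Chain' (· < ·) (i :: l ++ [j]) ∧ List.Chain' (hbStep τ) (i :: l ++ [j])

/-! ### Attacks and TSO witnesses -/

/-- An attack: an attacker thread, a store instruction and a load instruction. -/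
structure Attack (Tid Lbl D : Type) : Type where
  attacker : Tid
  stinst : LInstr Lbl D
  ldinst : LInstr Lbl D

def isStoreInstr (li : LInstr Lbl D) : Prop := ∃ ae ve, li.ins = .store ae ve
def isLoadInstr (li : LInstr Lbl D) : Prop := ∃ r ae, li.ins = .load r ae

/-- The attack's instructions belong to the attacker thread and have the right
kinds. -/
def ValidAttack (P : Program Tid Lbl D) (A : Attack Tid Lbl D) : Prop :=
  A.stinst ∈ (P.threads A.attacker).code ∧ isStoreInstr A.stinst ∧
  A.ldinst ∈ (P.threads A.attacker).code ∧ isLoadInstr A.ldinst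

/-- The computation `τ₁ · isu · τ₂ · ld · τ₃ · st · τ₄` of a TSO witness. -/
def witnessWord (att : Tid) (τ₁ τ₂ τ₃ τ₄ : List (Act Tid D)) (aL vL aS vS : D) :
    List (Act Tid D) :=
  τ₁ ++ .issue att :: (τ₂ ++ .load att aL vL :: (τ₃ ++ .store att aS vS :: τ₄))

/-- Conditions (W1)–(W5) for a TSO witness
`τ = τ₁ · isu_st · τ₂ · ld · τ₃ · st · τ₄` of the attack `A`:
(W1) only the attacker delays stores; (W2) `st` is an instance of `stinst` and
the first delayed store of the attacker, `ld` is an instance of `ldinst` and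
the last action of the attacker overstepped by `st` (`τ₂` contains no fences
and no stores of the attacker); (W3) `ld hb⁺ a` for every action `a` in
`ld · τ₃ · st`; (W4) `τ₄` consists only of stores of the attacker issued
before `ld` and delayed past it; (W5) all these delayed stores have addresses
different from the address of `ld`. -/
def WitnessShape [Zero D] (P : Program Tid Lbl D) (A : Attack Tid Lbl D)
    (τ₁ τ₂ τ₃ τ₄ : List (Act Tid D)) (aL vL aS vS : D) : Prop :=
  ValidAttack P A ∧
  aS ≠ aL ∧
  (let att := A.attacker
   let τ : List (Act Tid D) := witnessWord att τ₁ τ₂ τ₃ τ₄ aL vL aS vS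
   let pIsu : ℕ := τ₁.length
   let pLd : ℕ := τ₁.length + 1 + τ₂.length
   let pSt : ℕ := τ₁.length + 1 + τ₂.length + 1 + τ₃.length
   -- τ is a TSO computation; the issue at pIsu stems from stinst, the load at
   -- pLd stems from ldinst, and the attacker executes no fence in between
   (∃ ρ c, Run P ρ c ∧ acts ρ = τ ∧ (∀ t, c.buf t = []) ∧
      (∃ ev, ρ[pIsu]? = some ev ∧ ev.2 = some A.stinst) ∧
      (∃ ev, ρ[pLd]? = some ev ∧ ev.2 = some A.ldinst) ∧
      (∀ q, pIsu < q → q < pLd →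
        ¬ ∃ li, ρ[q]? = some (Act.loc att, some li) ∧ li.ins = Instr.mfence)) ∧
   -- st is the store action corresponding to the issue action at pIsu
   issueOfStore τ pSt = some pIsu ∧
   -- (W1): the stores of all other threads immediately follow their issues
   (∀ t, t ≠ att → ∀ j a v, τ[j]? = some (.store t a v) → storeDelay τ j = 0) ∧
   -- (W2): st is the first delayed store of the attacker …
   (∀ j a v, j < pSt → τ[j]? = some (.store att a v) → storeDelay τ j = 0) ∧
   -- … and τ₂ contains no stores of the attacker (ld is the last overstepped action)
   (∀ x ∈ τ₂, ¬ isStoreOf att x) ∧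
   -- τ₃ contains only helper actions
   (∀ x ∈ τ₃, x.thread ≠ att) ∧
   -- (W3): ld happens-before every action in ld·τ₃·st
   (∀ q, pLd < q → q ≤ pSt → ∃ m n, nodeAt τ pLd = some m ∧ nodeAt τ q = some n ∧
      Relation.TransGen (traceOf τ).hb m n) ∧
   -- (W4): τ₄ consists only of stores of the attacker …
   (∀ x ∈ τ₄, ∃ a v, x = Act.store att a v ∧
      -- (W5): … whose addresses differ from the address of ld
      a ≠ aL) ∧
   -- (W4): … that were issued before ld
   (∀ j, pSt < j → ∀ a v, τ[j]? = some (.store att a v) →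
      ∃ i, issueOfStore τ j = some i ∧ i < pLd))

/-- A TSO witness for attack `A`. -/
def TSOWitness [Zero D] (P : Program Tid Lbl D) (A : Attack Tid Lbl D)
    (τ : List (Act Tid D)) : Prop :=
  ∃ τ₁ τ₂ τ₃ τ₄ aL vL aS vS,
    τ = witnessWord A.attacker τ₁ τ₂ τ₃ τ₄ aL vL aS vS ∧
    WitnessShape P A τ₁ τ₂ τ₃ τ₄ aL vL aS vS

/-- A feasible attack: an attack admitting a TSO witness. -/
def FeasibleAttack [Zero D] (P : Program Tid Lbl D) (A : Attack Tid Lbl D) : Prop :=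
  ValidAttack P A ∧ ∃ τ, TSOWitness P A τ
/-! ### The instrumentation (Section 5) -/

/-- The data domain of the instrumented program: base values, auxiliary delay
addresses `(a, d)` and tagged buffered values `(v, d)`, auxiliary
happens-before addresses `(a, hb)`, the fresh addresses `a_st`, `hb`, `suc`
(and the flag used in the parameterized instrumentation), access levels
(`acc 1` = load access, `acc 2` = store access; no access is the initial
value `0`), and the value `true`. -/
inductive IVal (D : Type) : Type where
  | base (v : D)
  | dAddr (a : D)
  | dVal (v : D)
  | hbAddr (a : D)
  | aSt
  | hbFlag
  | sucFlag
  | attFlag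
  | acc (k : ℕ)
  | tru

instance [Zero D] : Zero (IVal D) := ⟨.base 0⟩

/-- Read a base value (seeing through the delay tag). -/
def IVal.toD [Zero D] : IVal D → D
  | .base v => v
  | .dVal v => v
  | _ => (0 : D)

/-- Labels of the instrumented program: original labels, labels of the code
copy, and two kinds of fresh intermediate labels. -/
abbrev ILbl (Lbl : Type) : Type := Lbl ⊕ Lbl ⊕ (ℕ × ℕ × ℕ) ⊕ (Lbl × ℕ)

def olbl : Lbl → ILbl Lbl := Sum.inl
def clbl : Lbl → ILbl Lbl := fun l => Sum.inr (Sum.inl l)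
def nlbl : ℕ × ℕ × ℕ → ILbl Lbl := fun x => Sum.inr (Sum.inr (Sum.inl x))
def slbl : Lbl × ℕ → ILbl Lbl := fun x => Sum.inr (Sum.inr (Sum.inr x))

/-- Registers of the instrumented program: register `r` of the original
program becomes `r + 2`; registers `0`, `1` are the fresh auxiliary
registers. -/
def shiftRho [Zero D] (ρ : ℕ → IVal D) : ℕ → D := fun r => (ρ (r + 2)).toD

def liftE [Zero D] (e : (ℕ → D) → D) : (ℕ → IVal D) → IVal D :=
  fun ρ => .base (e (shiftRho ρ))
def dAddrE [Zero D] (e : (ℕ → D) → D) : (ℕ → IVal D) → IVal D :=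
  fun ρ => .dAddr (e (shiftRho ρ))
def dValE [Zero D] (e : (ℕ → D) → D) : (ℕ → IVal D) → IVal D :=
  fun ρ => .dVal (e (shiftRho ρ))
def hbAddrE [Zero D] (e : (ℕ → D) → D) : (ℕ → IVal D) → IVal D :=
  fun ρ => .hbAddr (e (shiftRho ρ))

def truE : (ℕ → IVal D) → IVal D := fun _ => .tru

/-- A condition as an expression: nonzero iff the condition holds. -/
def condE [Zero D] (p : (ℕ → IVal D) → Prop) : (ℕ → IVal D) → IVal D :=
  fun ρ => if p ρ then .tru else .base 0

/-- Lift an instruction of the original program to the instrumented domain. -/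
def liftInstr [Zero D] : Instr D → Instr (IVal D)
  | .load r ae => .load (r + 2) (liftE ae)
  | .store ae ve => .store (liftE ae) (liftE ve)
  | .mfence => .mfence
  | .assign r e => .assign (r + 2) (liftE e)
  | .assert e => .assert (liftE e)
  | .tas r ae ve => .tas (r + 2) (liftE ae) (liftE ve)

def liftLI [Zero D] (li : LInstr Lbl D) : LInstr (ILbl Lbl) (IVal D) :=
  ⟨olbl li.src, liftInstr li.ins, olbl li.dst⟩

/-- Instrumentation `⟪stinst⟫` of the attack's store (Equation (1)): execute
the store on the auxiliary delay address, record the used address in `a_st`,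
and move to the code copy. -/
def attMoveStore [Zero D] (st : LInstr Lbl D) : List (LInstr (ILbl Lbl) (IVal D)) :=
  match st.ins with
  | .store ae ve =>
      [⟨olbl st.src, .store (dAddrE ae) (dValE ve), nlbl (0, 0, 0)⟩,
       ⟨nlbl (0, 0, 0), .store (fun _ => .aSt) (liftE ae), clbl st.dst⟩]
  | _ => []

/-- Instrumentation `⟪ldinst⟫` of the attack's load (Equation (2)): check that
the load has not read its value early, raise the `hb` flag and set the
happens-before address of the load's address to load access; then the
attacker stops. -/
def attMoveLoad [Zero D] (ld : LInstr Lbl D) : List (LInstr (ILbl Lbl) (IVal D)) :=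
  match ld.ins with
  | .load _ ae =>
      [⟨clbl ld.src, .load 0 (dAddrE ae), nlbl (0, 1, 0)⟩,
       ⟨nlbl (0, 1, 0), .assert (condE fun ρ => ρ 0 = IVal.base 0), nlbl (0, 1, 1)⟩,
       ⟨nlbl (0, 1, 1), .store (fun _ => .hbFlag) truE, nlbl (0, 1, 2)⟩,
       ⟨nlbl (0, 1, 2), .store (hbAddrE ae) (fun _ => .acc 1), nlbl (0, 1, 3)⟩]
  | _ => []

/-- The attacker's code copy (Equations (3)–(6)): stores go to the auxiliary
delay addresses, loads read the buffered value from the delay address if there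
is one and memory otherwise, fences are deleted. -/
def attCopy [Zero D] (i : ℕ) (li : LInstr Lbl D) : List (LInstr (ILbl Lbl) (IVal D)) :=
  match li.ins with
  | .store ae ve => [⟨clbl li.src, .store (dAddrE ae) (dValE ve), clbl li.dst⟩]
  | .load r ae =>
      [⟨clbl li.src, .load 0 (dAddrE ae), nlbl (0, 2 + i, 0)⟩,
       ⟨nlbl (0, 2 + i, 0), .assert (condE fun ρ => ρ 0 = IVal.base 0), nlbl (0, 2 + i, 1)⟩,
       ⟨nlbl (0, 2 + i, 1), .load (r + 2) (liftE ae), clbl li.dst⟩,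
       ⟨nlbl (0, 2 + i, 0), .assert (condE fun ρ => ρ 0 ≠ IVal.base 0), nlbl (0, 2 + i, 2)⟩,
       ⟨nlbl (0, 2 + i, 2), .load (r + 2) (dAddrE ae), clbl li.dst⟩]
  | .mfence => []
  | .tas _ _ _ => []
  | ins => [⟨clbl li.src, liftInstr ins, clbl li.dst⟩]

/-- The instrumented attacker thread. -/
def attackerThread [Zero D] (st ld : LInstr Lbl D) (th : ThreadCode Lbl D) :
    ThreadCode (ILbl Lbl) (IVal D) :=
  ⟨th.nregs + 2, olbl th.init,
    th.code.map liftLI ++ attMoveStore st ++ attMoveLoad ld ++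
      (th.code.mapIdx fun i li => attCopy i li).flatten⟩

/-- Helpers executing the original code check that the `hb` flag has not been
raised (Equation (7)). -/
def helpGuard [Zero D] (i : ℕ) (li : LInstr Lbl D) : List (LInstr (ILbl Lbl) (IVal D)) :=
  [⟨olbl li.src, .load 0 (fun _ => .hbFlag), nlbl (1, i, 0)⟩,
   ⟨nlbl (1, i, 0), .assert (condE fun ρ => ρ 0 = IVal.base 0), nlbl (1, i, 1)⟩,
   ⟨nlbl (1, i, 1), liftInstr li.ins, olbl li.dst⟩]

/-- Transitions of a helper into its code copy (Equations (8), (9)): a load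
requires a previous store access to its address, a store requires at least a
load access and records a store access. -/
def helpMove [Zero D] (i : ℕ) (li : LInstr Lbl D) : List (LInstr (ILbl Lbl) (IVal D)) :=
  match li.ins with
  | .load r ae =>
      [⟨olbl li.src, .load 0 (hbAddrE ae), nlbl (1, i, 2)⟩,
       ⟨nlbl (1, i, 2), .assert (condE fun ρ => ρ 0 = IVal.acc 2), nlbl (1, i, 3)⟩,
       ⟨nlbl (1, i, 3), .load (r + 2) (liftE ae), clbl li.dst⟩]
  | .store ae ve =>
      [⟨olbl li.src, .load 0 (hbAddrE ae), nlbl (1, i, 2)⟩,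
       ⟨nlbl (1, i, 2), .assert (condE fun ρ => ρ 0 = IVal.acc 1 ∨ ρ 0 = IVal.acc 2),
          nlbl (1, i, 4)⟩,
       ⟨nlbl (1, i, 4), .store (liftE ae) (liftE ve), nlbl (1, i, 5)⟩,
       ⟨nlbl (1, i, 5), .store (hbAddrE ae) (fun _ => .acc 2), clbl li.dst⟩]
  | .tas r ae ve =>
      [⟨olbl li.src, .load 0 (hbAddrE ae), nlbl (1, i, 2)⟩,
       ⟨nlbl (1, i, 2), .assert (condE fun ρ => ρ 0 = IVal.acc 1 ∨ ρ 0 = IVal.acc 2),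
          nlbl (1, i, 4)⟩,
       ⟨nlbl (1, i, 4), .tas (r + 2) (liftE ae) (liftE ve), nlbl (1, i, 5)⟩,
       ⟨nlbl (1, i, 5), .store (hbAddrE ae) (fun _ => .acc 2), clbl li.dst⟩]
  | _ => []

/-- The helpers' code copy (Equations (10)–(12)): loads and stores maintain
the maximal access type on the auxiliary happens-before addresses. -/
def helpCopy [Zero D] (i : ℕ) (li : LInstr Lbl D) : List (LInstr (ILbl Lbl) (IVal D)) :=
  match li.ins with
  | .store ae ve =>
      [⟨clbl li.src, .store (liftE ae) (liftE ve), nlbl (1, i, 6)⟩,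
       ⟨nlbl (1, i, 6), .store (hbAddrE ae) (fun _ => .acc 2), clbl li.dst⟩]
  | .load r ae =>
      [⟨clbl li.src, .assign 0 (liftE ae), nlbl (1, i, 7)⟩,
       ⟨nlbl (1, i, 7), .load (r + 2) (fun ρ => ρ 0), nlbl (1, i, 8)⟩,
       ⟨nlbl (1, i, 8), .load 1 (fun ρ => .hbAddr ((ρ 0).toD)), nlbl (1, i, 9)⟩,
       ⟨nlbl (1, i, 9), .store (fun ρ => .hbAddr ((ρ 0).toD))
          (fun ρ => if ρ 1 = IVal.acc 2 then IVal.acc 2 else IVal.acc 1), clbl li.dst⟩]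
  | .tas r ae ve =>
      [⟨clbl li.src, .tas (r + 2) (liftE ae) (liftE ve), nlbl (1, i, 10)⟩,
       ⟨nlbl (1, i, 10), .store (hbAddrE ae) (fun _ => .acc 2), clbl li.dst⟩]
  | ins => [⟨clbl li.src, liftInstr ins, clbl li.dst⟩]

/-- The success check (Equation (13)), added at every label of the code copy:
if the happens-before address of the address recorded in `a_st` has been
accessed, raise the success flag. -/
def sucCheck [Zero D] (l : Lbl) : List (LInstr (ILbl Lbl) (IVal D)) :=
  [⟨clbl l, .load 0 (fun _ => .aSt), slbl (l, 0)⟩,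
   ⟨slbl (l, 0), .load 1 (fun ρ => .hbAddr ((ρ 0).toD)), slbl (l, 1)⟩,
   ⟨slbl (l, 1), .assert (condE fun ρ => ρ 1 ≠ IVal.base 0), slbl (l, 2)⟩,
   ⟨slbl (l, 2), .store (fun _ => .sucFlag) truE, slbl (l, 3)⟩]

/-- The instrumented helper thread. -/
def helperThread [Zero D] (th : ThreadCode Lbl D) : ThreadCode (ILbl Lbl) (IVal D) :=
  ⟨th.nregs + 2, olbl th.init,
    (th.code.mapIdx fun i li =>
      helpGuard i li ++ helpMove i li ++ helpCopy i li ++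
      sucCheck li.src ++ sucCheck li.dst).flatten⟩

/-- The program `P_A`: `P` instrumented for the attack `A`. -/
def instrument [Zero D] (P : Program Tid Lbl D) (A : Attack Tid Lbl D) :
    Program Tid (ILbl Lbl) (IVal D) :=
  ⟨fun t => if t = A.attacker then attackerThread A.stinst A.ldinst (P.threads t)
            else helperThread (P.threads t)⟩

/-- SC reachability of a configuration satisfying `G`. -/
def ReachSC [Zero D] (P : Program Tid Lbl D) (G : Conf Tid Lbl D → Prop) : Prop :=
  ∃ ρ c, Run P ρ c ∧ SCshape (acts ρ) ∧ G c

/-- The instrumented program reaches a goal configuration (a configuration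
with `val(suc) = true`) under SC. -/
def ReachGoalSC {Lbl' : Type} [Zero D] (P' : Program Tid Lbl' (IVal D)) : Prop :=
  ReachSC P' fun c => c.mem .sucFlag = .tru

/-! ### Parameterized programs and the parameterized instrumentation -/

/-- The instance `P(I)` of a parameterized program `P` with threads
`t₁, …, t_k`: it declares `I i` identical copies of thread `t_i`. -/
def instProg {k : ℕ} (P : Program (Fin k) Lbl D) (I : Fin k → ℕ) :
    Program (Σ i : Fin k, Fin (I i)) Lbl D :=
  ⟨fun ti => P.threads ti.1⟩

/-- A parameterized program is robust if all its instances are robust. -/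
def ParamRobust {k : ℕ} [Zero D] (P : Program (Fin k) Lbl D) : Prop :=
  ∀ I : Fin k → ℕ, Robust (instProg P I)

/-- In the parameterized instrumentation, the attacker's move to the code copy
additionally performs an atomic test-and-set of a fresh flag variable, so that
at most one copy of the attacker thread delays stores. -/
def attMoveStoreTas [Zero D] (st : LInstr Lbl D) : List (LInstr (ILbl Lbl) (IVal D)) :=
  match st.ins with
  | .store ae ve =>
      [⟨olbl st.src, .tas 0 (fun _ => .attFlag) truE, nlbl (0, 0, 1)⟩,
       ⟨nlbl (0, 0, 1), .assert (condE fun ρ => ρ 0 = IVal.base 0), nlbl (0, 0, 2)⟩,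
       ⟨nlbl (0, 0, 2), .store (dAddrE ae) (dValE ve), nlbl (0, 0, 0)⟩,
       ⟨nlbl (0, 0, 0), .store (fun _ => .aSt) (liftE ae), clbl st.dst⟩]
  | _ => []

/-- The attacker thread of the parameterized instrumentation: instrumented
both as an attacker (with the test-and-set guarded move) and as a helper. -/
def pAttackerThread [Zero D] (st ld : LInstr Lbl D) (th : ThreadCode Lbl D) :
    ThreadCode (ILbl Lbl) (IVal D) :=
  ⟨th.nregs + 2, olbl th.init,
    (th.code.mapIdx fun i li =>
      helpGuard i li ++ helpMove i li ++ helpCopy i li ++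
      sucCheck li.src ++ sucCheck li.dst).flatten ++
    attMoveStoreTas st ++ attMoveLoad ld ++
    (th.code.mapIdx fun i li => attCopy i li).flatten⟩

/-- The parameterized instrumentation `P_A` of a parameterized program. -/
def pinstrument {k : ℕ} [Zero D] (P : Program (Fin k) Lbl D) (A : Attack (Fin k) Lbl D) :
    Program (Fin k) (ILbl Lbl) (IVal D) :=
  ⟨fun t => if t = A.attacker then pAttackerThread A.stinst A.ldinst (P.threads t)
            else helperThread (P.threads t)⟩
/-! ### Fence insertion -/

/-- Inserting fences at the labels in `F`: each instruction from a label
`l ∈ F` is moved to the fresh label `l_f` (encoded `Sum.inr l`), and an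
`mfence` instruction from `l` to `l_f` is added. -/
def insertFences (P : Program Tid Lbl D) (F : Finset Lbl) :
    Program Tid (Lbl ⊕ Lbl) D :=
  ⟨fun t =>
    ⟨(P.threads t).nregs, Sum.inl (P.threads t).init,
      ((P.threads t).code.map fun li =>
        ⟨if li.src ∈ F then Sum.inr li.src else Sum.inl li.src, li.ins, Sum.inl li.dst⟩) ++
      F.toList.map fun l => ⟨Sum.inl l, Instr.mfence, Sum.inr l⟩⟩⟩

/-- A valid fence set: inserting fences at its labels yields a robust program. -/
def ValidFenceSet [Zero D] (P : Program Tid Lbl D) (F : Finset Lbl) : Prop :=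
  Robust (insertFences P F)

/-- An irreducible valid fence set: no strict subset is valid. -/
def IrreducibleFenceSet [Zero D] (P : Program Tid Lbl D) (F : Finset Lbl) : Prop :=
  ValidFenceSet P F ∧ ∀ F' ⊂ F, ¬ ValidFenceSet P F'

/-- The labelled instruction of the fenced program corresponding to a labelled
instruction of `P`. -/
def mapLI (F : Finset Lbl) (li : LInstr Lbl D) : LInstr (Lbl ⊕ Lbl) D :=
  ⟨if li.src ∈ F then Sum.inr li.src else Sum.inl li.src, li.ins, Sum.inl li.dst⟩

/-- The attack of the fenced program corresponding to an attack of `P`. -/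
def mapAttack (F : Finset Lbl) (A : Attack Tid Lbl D) : Attack Tid (Lbl ⊕ Lbl) D :=
  ⟨A.attacker, mapLI F A.stinst, mapLI F A.ldinst⟩

/-- `F` eliminates the attack `A`: after inserting the fences of `F`, the
attack admits no TSO witness. -/
def EliminatesAttack [Zero D] (P : Program Tid Lbl D) (F : Finset Lbl)
    (A : Attack Tid Lbl D) : Prop :=
  ¬ ∃ τ, TSOWitness (insertFences P F) (mapAttack F A) τ

/-- An irreducible eliminating fence set for attack `A`. -/
def IrredElim [Zero D] (P : Program Tid Lbl D) (F : Finset Lbl)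
    (A : Attack Tid Lbl D) : Prop :=
  EliminatesAttack P F A ∧ ∀ F' ⊂ F, ¬ EliminatesAttack P F' A

/-- The (finitely many) labels occurring in the program. -/
def labelsOf [Fintype Tid] (P : Program Tid Lbl D) : Finset Lbl :=
  Finset.univ.biUnion fun t =>
    (((P.threads t).code.map LInstr.src) ++ ((P.threads t).code.map LInstr.dst) ++
      [(P.threads t).init]).toFinset

/-- The cost of a fence set. -/
def fenceCost (c : Lbl → ℝ) (F : Finset Lbl) : ℝ := ∑ l ∈ F, c l

/-- A feasible point of the 0/1-ILP of Section 6.2: a 0/1 (Boolean) variable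
`xF F` for every irreducible eliminating fence set `F` of every feasible
attack and a 0/1 variable `xl l` for every label `l`, such that for every
feasible attack `A` some irreducible eliminating fence set for `A` is selected
(`∑ᵢ x_{Fᵢ} ≥ 1`), and whenever a set is selected all its labels are selected
(`∑_{l ∈ Fᵢ} x_l ≥ |Fᵢ| · x_{Fᵢ}`). -/
def ILPFeasiblePoint [Zero D] (P : Program Tid Lbl D)
    (xF : Finset Lbl → Bool) (xl : Lbl → Bool) : Prop :=
  (∀ A : Attack Tid Lbl D, FeasibleAttack P A →
      ∃ F, IrredElim P F A ∧ xF F = true) ∧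
  (∀ (A : Attack Tid Lbl D) (F : Finset Lbl), FeasibleAttack P A → IrredElim P F A →
      xF F = true → ∀ l ∈ F, xl l = true)

/-- The objective function `f(x) = ∑_l c(l) · x_l` of the ILP. -/
def ILPCost [Fintype Tid] (P : Program Tid Lbl D) (c : Lbl → ℝ) (xl : Lbl → Bool) : ℝ :=
  ∑ l ∈ labelsOf P, if xl l then c l else 0

/-! ### Petri nets and the counter abstraction -/

/-- A Petri net, given by its weight functions `pre` and `post`. -/
structure PetriNet (S T : Type) : Type where
  pre : S → T → ℕ
  post : T → S → ℕ

/-- A transition is enabled in a marking. -/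
def PetriNet.enabled (N : PetriNet S T) (m : S → ℕ) (t : T) : Prop :=
  ∀ s, N.pre s t ≤ m s

/-- Firing a transition. -/
def PetriNet.fire (N : PetriNet S T) (m : S → ℕ) (t : T) : S → ℕ :=
  fun s => m s - N.pre s t + N.post t s

/-- Reachability of a marking by a firing sequence. -/
inductive PetriNet.Reach (N : PetriNet S T) : (S → ℕ) → (S → ℕ) → Prop where
  | refl (m : S → ℕ) : PetriNet.Reach N m m
  | step (m : S → ℕ) (t : T) (m' : S → ℕ) :
      N.enabled m t → PetriNet.Reach N (N.fire m t) m' → PetriNet.Reach N m m'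

/-- Coverability of a marking. -/
def PetriNet.Coverable (N : PetriNet S T) (m₀ m : S → ℕ) : Prop :=
  ∃ m', PetriNet.Reach N m₀ m' ∧ ∀ s, m s ≤ m' s

/-- Expressions evaluate identically on register valuations that agree on the
declared registers `0, …, n-1`. -/
def ExprOK (n : ℕ) (e : (ℕ → D) → D) : Prop :=
  ∀ ρ ρ' : ℕ → D, (∀ r < n, ρ r = ρ' r) → e ρ = e ρ'

/-- An instruction only uses the declared registers. -/
def InstrOK (n : ℕ) : Instr D → Prop
  | .load r ae => r < n ∧ ExprOK n ae
  | .store ae ve => ExprOK n ae ∧ ExprOK n ve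
  | .mfence => True
  | .assign r e => r < n ∧ ExprOK n e
  | .assert e => ExprOK n e
  | .tas r ae ve => r < n ∧ ExprOK n ae ∧ ExprOK n ve

/-- All threads only use their declared registers. -/
def RegsBounded (P : Program Tid Lbl D) : Prop :=
  ∀ t, ∀ li ∈ (P.threads t).code, InstrOK (P.threads t).nregs li.ins

/-- Extension of a valuation of the declared registers by `0`. -/
def extV [Zero D] (n : ℕ) (vs : Fin n → D) : ℕ → D :=
  fun r => if h : r < n then vs ⟨r, h⟩ else 0

/-- Update of a valuation of the declared registers. -/
def updV {n : ℕ} (vs : Fin n → D) (r : ℕ) (v : D) : Fin n → D :=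
  fun q => if (q : ℕ) = r then v else vs q

section PN

variable {k : ℕ} (P : Program (Fin k) Lbl D)

/-- Places of the counter-abstraction Petri net: a place `p_{a,v}` for every
address `a` and value `v` (representing `val(a) = v`), and a place
`p_{i,l,v̄}` for every thread `i`, label `l` and valuation `v̄` of the declared
registers (counting the instances of thread `i` at control state `l` with
registers `v̄`). -/
def PNPlace : Type :=
  (D × D) ⊕ (Σ i : Fin k, Lbl × (Fin ((P.threads i).nregs) → D))

/-- Raw transitions: a spawn transition for every thread, and a transition for
every thread, instruction (index) and relevant valuation/value combination. -/
def PNTransRaw : Type :=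
  (Fin k) ⊕ (Σ i : Fin k, ℕ × ((Fin ((P.threads i).nregs) → D) × D))

variable [Zero D]

/-- Guard: the indexed instruction exists, and asserts only fire when their
condition evaluates to a nonzero value. -/
def PNGuard : PNTransRaw P → Prop
  | .inl _ => True
  | .inr ⟨i, j, vs, _⟩ =>
      match ((P.threads i).code)[j]? with
      | some li =>
          match li.ins with
          | .assert e => e (extV ((P.threads i).nregs) vs) ≠ 0
          | _ => True
      | none => False

def PNTrans : Type := {x : PNTransRaw P // PNGuard P x}

/-- The weight function `W(s, t)`. -/
def PNpre : PNPlace P → PNTrans P → ℕ := fun s t =>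
  match t.1 with
  | .inl _ => 0
  | .inr ⟨i, j, vs, v⟩ =>
      match ((P.threads i).code)[j]? with
      | none => 0
      | some li =>
          (if s = Sum.inr ⟨i, (li.src, vs)⟩ then 1 else 0) +
          (let ext := extV ((P.threads i).nregs) vs
           match li.ins with
           | .load _ ae => if s = Sum.inl (ae ext, v) then 1 else 0
           | .store ae _ => if s = Sum.inl (ae ext, v) then 1 else 0
           | .tas _ ae _ => if s = Sum.inl (ae ext, v) then 1 else 0
           | _ => 0)

/-- The weight function `W(t, s)`. -/
def PNpost : PNTrans P → PNPlace P → ℕ := fun t s =>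
  match t.1 with
  | .inl i => if s = Sum.inr ⟨i, ((P.threads i).init, fun _ => (0 : D))⟩ then 1 else 0
  | .inr ⟨i, j, vs, v⟩ =>
      match ((P.threads i).code)[j]? with
      | none => 0
      | some li =>
          let ext := extV ((P.threads i).nregs) vs
          match li.ins with
          | .load r ae =>
              (if s = Sum.inr ⟨i, (li.dst, updV vs r v)⟩ then 1 else 0) +
              (if s = Sum.inl (ae ext, v) then 1 else 0)
          | .store ae ve =>
              (if s = Sum.inr ⟨i, (li.dst, vs)⟩ then 1 else 0) +
              (if s = Sum.inl (ae ext, ve ext) then 1 else 0)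
          | .mfence => if s = Sum.inr ⟨i, (li.dst, vs)⟩ then 1 else 0
          | .assign r e => if s = Sum.inr ⟨i, (li.dst, updV vs r (e ext))⟩ then 1 else 0
          | .assert _ => if s = Sum.inr ⟨i, (li.dst, vs)⟩ then 1 else 0
          | .tas r ae ve =>
              (if s = Sum.inr ⟨i, (li.dst, updV vs r v)⟩ then 1 else 0) +
              (if s = Sum.inl (ae ext, ve ext) then 1 else 0)

/-- The counter-abstraction Petri net of a parameterized program. -/
def PNnet : PetriNet (PNPlace P) (PNTrans P) := ⟨PNpre P, PNpost P⟩

/-- The initial marking: one token on `p_{a,0}` for every address `a`. -/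
def PNm0 : PNPlace P → ℕ := fun s =>
  match s with
  | .inl (_, v) => if v = 0 then 1 else 0
  | .inr _ => 0

/-- The marking to be covered: one token on `p_{suc,true}`. -/
def PNmsuc (aSuc vTrue : D) : PNPlace P → ℕ := fun s =>
  if s = Sum.inl (aSuc, vTrue) then 1 else 0

end PN

/-! In an SC computation every issue is immediately followed by its store, so every trace node
has a well-defined position: that of its issue, load or local action. Each `po`, `st` and `src`
edge then leads to a later position, and so does each `cf` edge, because a load comes before
every store that overwrites its source. Hence `hb` is acyclic on SC traces. In a TSO witness the
delayed store `st` was issued before `ld`, which gives `st po ld`, and (W3) gives `ld hb⁺ st`.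
The trace of the witness therefore has an `hb` cycle, so it is a TSO trace but no SC trace. -/

theorem _root_.List.filter_take_length_getElem? {α : Type*} {l : List α} {f : α → Bool}
    {q : ℕ} {x : α} (hq : l[q]? = some x) (hf : f x = true) :
    (l.filter f).take ((l.take q).filter f).length = (l.take q).filter f ∧
    (l.filter f)[((l.take q).filter f).length]? = some x := by
  obtain ⟨hlt, hx⟩ := List.getElem?_eq_some_iff.mp hq
  have hsplit : l.filter f = (l.take q).filter f ++ (x :: l.drop (q + 1)).filter f := by
    rw [← List.filter_append, ← hx, ← List.drop_eq_getElem_cons hlt, List.take_append_drop]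
  rw [hsplit]
  exact ⟨List.take_left, by simp [hf]⟩

theorem _root_.List.exists_getElem?_of_getElem?_filter {α : Type*} {f : α → Bool} :
    ∀ {l : List α} {r : ℕ} {x : α}, (l.filter f)[r]? = some x →
      ∃ q, l[q]? = some x ∧ f x = true ∧ ((l.take q).filter f).length = r
  | [], _, _, h => by simp at h
  | a :: l, r, x, h => by
    by_cases hfa : f a = true
    · rw [List.filter_cons_of_pos hfa] at h
      cases r with
      | zero =>
        obtain rfl : a = x := by simpa using h
        exact ⟨0, rfl, hfa, by simp⟩
      | succ r =>
        obtain ⟨q, hq, hfx, hcnt⟩ :=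
          List.exists_getElem?_of_getElem?_filter (l := l) (by simpa using h)
        exact ⟨q + 1, by simpa using hq, hfx, by simp [List.filter_cons_of_pos hfa, hcnt]⟩
    · rw [List.filter_cons_of_neg hfa] at h
      obtain ⟨q, hq, hfx, hcnt⟩ := List.exists_getElem?_of_getElem?_filter h
      exact ⟨q + 1, by simpa using hq, hfx, by simp [List.filter_cons_of_neg hfa, hcnt]⟩

section Counting

variable {τ : List (Act Tid D)} {p : Act Tid D → Prop}

theorem cntP_zero : cntP τ p 0 = 0 := by
  simp [cntP]

theorem cntP_mono {i j : ℕ} (h : i ≤ j) : cntP τ p i ≤ cntP τ p j := by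
  unfold cntP
  rw [show τ.take i = (τ.take j).take i by rw [List.take_take, Nat.min_eq_left h]]
  exact ((List.take_sublist _ _).filter _).length_le

theorem cntP_succ_of_sat {i : ℕ} {a : Act Tid D} (hi : τ[i]? = some a) (hp : p a) :
    cntP τ p (i + 1) = cntP τ p i + 1 := by
  simp [cntP, List.take_add_one, hi, hp]

theorem cntP_succ_of_not {i : ℕ} (h : ∀ a, τ[i]? = some a → ¬ p a) :
    cntP τ p (i + 1) = cntP τ p i := by
  rcases hi : τ[i]? with _ | a
  · simp [cntP, List.take_add_one, hi]
  · simp [cntP, List.take_add_one, hi, h a hi]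

theorem cntP_lt_of_lt {i j : ℕ} {a : Act Tid D} (hi : τ[i]? = some a) (hp : p a)
    (hij : i < j) : cntP τ p i < cntP τ p j := by
  have := cntP_succ_of_sat hi hp
  exact (by omega : cntP τ p i < cntP τ p (i + 1)).trans_le (cntP_mono hij)

theorem cntP_cons (x : Act Tid D) (i : ℕ) :
    cntP (x :: τ) p (i + 1) = (if p x then 1 else 0) + cntP τ p i := by
  by_cases hp : p x <;> simp [cntP, hp, Nat.add_comm]

theorem cntP_append_of_le (l₁ l₂ : List (Act Tid D)) {j : ℕ} (h : j ≤ l₁.length) :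
    cntP (l₁ ++ l₂) p j = cntP l₁ p j := by
  rw [cntP, List.take_append_of_le_length h, cntP]

theorem cntP_append (l₁ l₂ : List (Act Tid D)) (k : ℕ) :
    cntP (l₁ ++ l₂) p (l₁.length + k) = cntP l₁ p l₁.length + cntP l₂ p k := by
  unfold cntP
  rw [List.take_append, List.filter_append, List.length_append, List.take_length,
    Nat.add_sub_cancel_left, List.take_of_length_le (by omega)]

theorem cntP_eq_length_filter {f : Act Tid D → Bool} (hf : ∀ a, f a = true ↔ p a) (q : ℕ) :
    cntP τ p q = ((τ.take q).filter f).length := by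
  unfold cntP
  congr 1
  refine List.filter_congr fun x _ => ?_
  rw [Bool.eq_iff_iff]
  simp only [decide_eq_true_eq, hf]

theorem cntP_eq_length_range_filter {f : ℕ → Bool}
    (hf : ∀ i a, τ[i]? = some a → (f i = true ↔ p a)) :
    ∀ q, q ≤ τ.length → cntP τ p q = ((List.range q).filter f).length
  | 0, _ => by simp [cntP]
  | q + 1, hq => by
    obtain ⟨a, ha⟩ : ∃ a, τ[q]? = some a := ⟨τ[q], List.getElem?_eq_getElem hq⟩
    have ih := cntP_eq_length_range_filter hf q (by omega)
    rw [List.range_succ, List.filter_append]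
    by_cases hp : p a
    · simp [cntP_succ_of_sat ha hp, (hf q a ha).mpr hp, ih]
    · rw [cntP_succ_of_not (by simpa [ha] using hp)]
      simp [show f q = false by rw [← Bool.not_eq_true, hf q a ha]; exact hp, ih]

theorem cntP_succ_of_getElem? {i : ℕ} {a : Act Tid D} (hi : τ[i]? = some a) :
    cntP τ p (i + 1) = cntP τ p i + if p a then 1 else 0 := by
  by_cases hp : p a
  · simp [cntP_succ_of_sat hi hp, hp]
  · simp [cntP_succ_of_not (p := p) fun b hb => Option.some.inj (hi.symm.trans hb) ▸ hp, hp]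

theorem posOfNth_eq_of_cntP {q : ℕ} {x : Act Tid D} (hq : τ[q]? = some x) (hp : p x) :
    posOfNth τ p (cntP τ p q) = some q := by
  have hlt : q < τ.length := (List.getElem?_eq_some_iff.mp hq).1
  set f : ℕ → Bool := fun i => decide (∃ a, τ[i]? = some a ∧ p a)
  have hf : ∀ i a, τ[i]? = some a → (f i = true ↔ p a) := by
    intro i a hia
    simp [f, hia]
  have := (List.filter_take_length_getElem? (l := List.range τ.length) (f := f)
    (List.getElem?_range hlt) (by simpa [f] using ⟨x, hq, hp⟩)).2
  rw [List.take_range, Nat.min_eq_left hlt.le, ← cntP_eq_length_range_filter hf q hlt.le] at this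
  unfold posOfNth
  convert this

end Counting

/-- Boolean forms of `¬ isStore` and `isIssue`: unlike the classical `decide` of those
propositions they reduce on constructors, so filters by them compute under `simp`. -/
def Act.isNonStoreB : Act Tid D → Bool
  | .issue _ => true
  | .store _ _ _ => false
  | .load _ _ _ => true
  | .loc _ => true

def Act.isIssueB : Act Tid D → Bool
  | .issue _ => true
  | .store _ _ _ => false
  | .load _ _ _ => false
  | .loc _ => false

theorem Act.isNonStoreB_iff (a : Act Tid D) : a.isNonStoreB = true ↔ ¬ a.isStore := by
  cases a <;> simp [isNonStoreB, isStore]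

section MergeStores

theorem length_mergeStores :
    ∀ (l s : List (Act Tid D)), (mergeStores l s).length = (l.filter Act.isNonStoreB).length
  | [], _ => rfl
  | .issue _ :: l, s
  | .load _ _ _ :: l, s
  | .loc _ :: l, s => by
    simp [mergeStores, List.filter_cons, Act.isNonStoreB, length_mergeStores l]
  | .store _ _ _ :: l, s => by simp [mergeStores, Act.isNonStoreB, length_mergeStores l]

theorem getElem?_mergeStores {x : Act Tid D} : ∀ {l s : List (Act Tid D)} {r : ℕ},
    (mergeStores l s)[r]? = some x →
    ∃ y, (l.filter Act.isNonStoreB)[r]? = some y ∧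
      (y = x ∨ y.isIssue ∧
        s[(((l.filter Act.isNonStoreB).take r).filter Act.isIssueB).length]? = some x)
  | [], _, _, h => by simp [mergeStores] at h
  | .store _ _ _ :: l, s, r, h => by
    simpa [mergeStores, List.filter_cons, Act.isNonStoreB] using getElem?_mergeStores (l := l) h
  | .issue t :: l, s, 0, h => by
    cases s <;>
      simp only [mergeStores, List.headD, List.getElem?_cons_zero, Option.some.injEq] at h <;>
      subst h <;> simp [List.filter_cons, Act.isNonStoreB, Act.isIssue]
  | .issue t :: l, s, r + 1, h => by
    obtain ⟨y, hy, hxy⟩ :=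
      getElem?_mergeStores (l := l) (s := s.tail) (r := r) (by simpa [mergeStores] using h)
    cases s <;> simp_all [List.filter_cons, Act.isNonStoreB, Act.isIssueB]
  | .load _ _ _ :: l, s, 0, h => by
    obtain rfl := Option.some.inj (h.symm.trans rfl)
    simp [List.filter_cons, Act.isNonStoreB]
  | .load _ _ _ :: l, s, r + 1, h => by
    obtain ⟨y, hy, hxy⟩ :=
      getElem?_mergeStores (l := l) (s := s) (r := r) (by simpa [mergeStores] using h)
    simp_all [List.filter_cons, Act.isNonStoreB, Act.isIssueB]
  | .loc _ :: l, s, 0, h => by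
    obtain rfl := Option.some.inj (h.symm.trans rfl)
    simp [List.filter_cons, Act.isNonStoreB]
  | .loc _ :: l, s, r + 1, h => by
    obtain ⟨y, hy, hxy⟩ :=
      getElem?_mergeStores (l := l) (s := s) (r := r) (by simpa [mergeStores] using h)
    simp_all [List.filter_cons, Act.isNonStoreB, Act.isIssueB]

end MergeStores

section RunInvariant

variable [Zero D] {P : Program Tid Lbl D}

theorem Step.cntP_store_add_buf {c c' : Conf Tid Lbl D} {ρ : List (Ev Tid Lbl D)}
    (h : Step P c ρ c') (t : Tid) :
    cntP (acts ρ) (isStoreOf t) (acts ρ).length + (c'.buf t).length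
      = cntP (acts ρ) (isIssueOf t) (acts ρ).length + (c.buf t).length := by
  cases h <;> simp only [updf] <;> (try split_ifs) <;> subst_vars <;>
    simp_all [acts, cntP_cons, cntP_zero, isStoreOf, isIssueOf, Act.isStore, Act.isIssue,
      Act.thread, Ne.symm, Nat.add_comm]

theorem Step.cntP_store_lt {c c' : Conf Tid Lbl D} {ρ : List (Ev Tid Lbl D)}
    (h : Step P c ρ c') {t : Tid} {j : ℕ} {a v : D} (hj : (acts ρ)[j]? = some (.store t a v)) :
    cntP (acts ρ) (isStoreOf t) j < cntP (acts ρ) (isIssueOf t) j + (c.buf t).length := by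
  cases h <;> rcases j with _ | _ | _ | j <;>
    simp_all [acts, cntP_cons, cntP_zero, isStoreOf, isIssueOf, Act.isStore, Act.isIssue,
      Act.thread]

theorem Steps.cntP_store_lt {c c' : Conf Tid Lbl D} {ρ : List (Ev Tid Lbl D)}
    (h : Steps P c ρ c') {t : Tid} {j : ℕ} {a v : D} (hj : (acts ρ)[j]? = some (.store t a v)) :
    cntP (acts ρ) (isStoreOf t) j < cntP (acts ρ) (isIssueOf t) j + (c.buf t).length := by
  induction h generalizing j with
  | refl => simp [acts] at hj
  | trans c₁ ρ₁ c₂ ρ₂ c₃ hstep _ ih =>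
    have hacts : acts (ρ₁ ++ ρ₂) = acts ρ₁ ++ acts ρ₂ := List.map_append ..
    rw [hacts] at hj ⊢
    by_cases hlt : j < (acts ρ₁).length
    · rw [List.getElem?_append_left hlt] at hj
      rw [cntP_append_of_le _ _ hlt.le, cntP_append_of_le _ _ hlt.le]
      exact hstep.cntP_store_lt hj
    · rw [List.getElem?_append_right (by omega)] at hj
      have := ih hj
      have := hstep.cntP_store_add_buf t
      rw [← Nat.add_sub_of_le (not_lt.mp hlt), cntP_append, cntP_append]
      omega

end RunInvariant

/-- Holds for every run, as the buffer of a thread holds exactly its issued but not yet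
flushed stores. -/
def StoresFollowIssues (τ : List (Act Tid D)) : Prop :=
  ∀ t j a v, τ[j]? = some (.store t a v) → cntP τ (isStoreOf t) j < cntP τ (isIssueOf t) j

theorem Run.storesFollowIssues [Zero D] {P : Program Tid Lbl D} {ρ : List (Ev Tid Lbl D)}
    {c : Conf Tid Lbl D} (h : Run P ρ c) : StoresFollowIssues (acts ρ) := fun _ _ _ _ hj => by
  simpa [initConf] using Steps.cntP_store_lt h hj

section SCStructure

variable {τ : List (Act Tid D)}

theorem SCshape.cntP_isIssueOf_le (hS : SCshape τ) (t : Tid) : ∀ q,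
    cntP τ (isIssueOf t) q ≤
      cntP τ (isStoreOf t) q + if ∃ i, q = i + 1 ∧ τ[i]? = some (.issue t) then 1 else 0
  | 0 => by simp [cntP_zero]
  | q + 1 => by
    have ih := hS.cntP_isIssueOf_le t q
    have hprev : (∃ i, q = i + 1 ∧ τ[i]? = some (.issue t)) →
        ∃ a v, τ[q]? = some (.store t a v) := by
      rintro ⟨i, rfl, hi⟩
      exact hS i t hi
    rcases hq : τ[q]? with _ | x
    · simp only [hq, reduceCtorEq, exists_false, imp_false] at hprev
      simp_all [cntP_succ_of_not]
    · rw [cntP_succ_of_getElem? hq, cntP_succ_of_getElem? hq]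
      cases x <;> split_ifs at ih ⊢ <;>
        simp_all [isIssueOf, isStoreOf, Act.isIssue, Act.isStore, Act.thread]
      omega

theorem SCshape.issue_before_store (hB : StoresFollowIssues τ) (hS : SCshape τ)
    {j : ℕ} {t : Tid} {a v : D} (hj : τ[j]? = some (.store t a v)) :
    ∃ i, j = i + 1 ∧ τ[i]? = some (.issue t) ∧
      cntP τ (isIssueOf t) i = cntP τ (isStoreOf t) j ∧ issueOfStore τ j = some i := by
  have hlt := hB t j a v hj
  have hle := hS.cntP_isIssueOf_le t j
  obtain ⟨i, rfl, hi⟩ : ∃ i, j = i + 1 ∧ τ[i]? = some (.issue t) := by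
    by_contra hn
    rw [if_neg hn] at hle
    omega
  rw [if_pos ⟨i, rfl, hi⟩, cntP_succ_of_sat hi ⟨trivial, rfl⟩] at hle
  have hcnt : cntP τ (isIssueOf t) i = cntP τ (isStoreOf t) (i + 1) := by
    rw [cntP_succ_of_sat (p := isIssueOf t) hi ⟨trivial, rfl⟩] at hlt
    omega
  refine ⟨i, rfl, hi, hcnt, ?_⟩
  simp only [issueOfStore, hj, ← hcnt]
  exact posOfNth_eq_of_cntP hi ⟨trivial, rfl⟩

theorem SCshape.storeOfIssue_eq (hB : StoresFollowIssues τ) (hS : SCshape τ)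
    {i : ℕ} {t : Tid} (hi : τ[i]? = some (.issue t)) : storeOfIssue τ i = some (i + 1) := by
  obtain ⟨a, v, hst⟩ := hS i t hi
  obtain ⟨i', hii', -, hcnt, -⟩ := hS.issue_before_store hB hst
  obtain rfl : i' = i := by omega
  simp only [storeOfIssue, hi, hcnt]
  exact posOfNth_eq_of_cntP hst ⟨trivial, rfl⟩

theorem SCshape.not_pendingIssue (hB : StoresFollowIssues τ) (hS : SCshape τ)
    {t : Tid} {a : D} {p i : ℕ} : ¬ pendingIssue τ t a p i := by
  rintro ⟨hip, hi, j, v, hsoi, hpj, -⟩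
  rw [hS.storeOfIssue_eq hB hi, Option.some.injEq] at hsoi
  omega

end SCStructure

section Nodes

variable {τ : List (Act Tid D)}

theorem rankAt_of_getElem? {q : ℕ} {a : Act Tid D} (hq : τ[q]? = some a) :
    rankAt τ q = cntP τ (fun x => x.thread = a.thread ∧ ¬ x.isStore) q := by
  simp only [rankAt, hq]

theorem rankAt_eq_length_filter {q : ℕ} {a : Act Tid D} (hq : τ[q]? = some a) :
    rankAt τ q =
      ((τ.take q).filter fun x => x.isNonStoreB && decide (x.thread = a.thread)).length := by
  rw [rankAt_of_getElem? hq]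
  exact cntP_eq_length_filter (fun x => by simp [Act.isNonStoreB_iff, and_comm]) q

theorem rankAt_lt_rankAt {i j : ℕ} {a b : Act Tid D} (hi : τ[i]? = some a)
    (hj : τ[j]? = some b) (ht : a.thread = b.thread) (ha : ¬ a.isStore) (hij : i < j) :
    rankAt τ i < rankAt τ j := by
  rw [rankAt_of_getElem? hi, rankAt_of_getElem? hj, ht]
  exact cntP_lt_of_lt hi ⟨ht, ha⟩ hij

theorem nodeAt_of_not_isStore {q : ℕ} {a : Act Tid D} (hq : τ[q]? = some a)
    (ha : ¬ a.isStore) : nodeAt τ q = some (a.thread, rankAt τ q) := by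
  cases a with
  | store => exact absurd trivial ha
  | _ => simp only [nodeAt, hq, Act.thread]

/-- A store node is represented by the position of its issue action. -/
def IsNodePos (τ : List (Act Tid D)) (q : ℕ) (n : Tid × ℕ) : Prop :=
  ∃ a, τ[q]? = some a ∧ ¬ a.isStore ∧ a.thread = n.1 ∧ rankAt τ q = n.2

theorem IsNodePos.nodeAt_eq {q : ℕ} {n : Tid × ℕ} (h : IsNodePos τ q n) :
    nodeAt τ q = some n := by
  obtain ⟨a, hq, ha, ht, hr⟩ := h
  rw [nodeAt_of_not_isStore hq ha, ht, hr]

theorem isNodePos_of_nodeAt {q : ℕ} {a : Act Tid D} {n : Tid × ℕ} (hq : τ[q]? = some a)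
    (ha : ¬ a.isStore) (hn : nodeAt τ q = some n) : IsNodePos τ q n := by
  rw [nodeAt_of_not_isStore hq ha, Option.some.injEq] at hn
  exact ⟨a, hq, ha, by rw [← hn], by rw [← hn]⟩

theorem IsNodePos.lt_of_rank_lt {p q : ℕ} {t : Tid} {r₁ r₂ : ℕ}
    (hp : IsNodePos τ p (t, r₁)) (hq : IsNodePos τ q (t, r₂)) (hr : r₁ < r₂) : p < q := by
  obtain ⟨a, hpa, ha, hta, rfl⟩ := hp
  obtain ⟨b, hqb, hb, htb, rfl⟩ := hq
  by_contra! hqp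
  rcases hqp.lt_or_eq with hlt | rfl
  · exact (rankAt_lt_rankAt hqb hpa (htb.trans hta.symm) hb hlt).not_gt hr
  · exact hr.ne rfl

theorem IsNodePos.unique {q q' : ℕ} {n : Tid × ℕ} (h : IsNodePos τ q n)
    (h' : IsNodePos τ q' n) : q = q' := by
  obtain ⟨a, hq, ha, hta, hra⟩ := h
  obtain ⟨b, hq', hb, htb, hrb⟩ := h'
  by_contra hne
  rcases Nat.lt_or_gt_of_ne hne with hlt | hlt
  · exact (rankAt_lt_rankAt hq hq' (hta.trans htb.symm) ha hlt).ne (hra.trans hrb.symm)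
  · exact (rankAt_lt_rankAt hq' hq (htb.trans hta.symm) hb hlt).ne (hrb.trans hra.symm)

theorem exists_isNodePos {t : Tid} {r : ℕ} (hr : r < (threadNodes τ t).length) :
    ∃ q, IsNodePos τ q (t, r) := by
  rw [threadNodes, length_mergeStores, List.filter_filter] at hr
  obtain ⟨q, hq, hf, hcnt⟩ :=
    List.exists_getElem?_of_getElem?_filter (List.getElem?_eq_getElem hr)
  simp only [Bool.and_eq_true, Act.isNonStoreB_iff, decide_eq_true_eq] at hf
  refine ⟨q, _, hq, hf.1, hf.2, ?_⟩
  rw [rankAt_eq_length_filter hq, hf.2, hcnt]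

theorem rankAt_lt_length_threadNodes {j : ℕ} {b : Act Tid D}
    (hj : τ[j]? = some b) (hb : ¬ b.isStore) : rankAt τ j < (threadNodes τ b.thread).length := by
  rw [threadNodes, length_mergeStores, List.filter_filter, rankAt_eq_length_filter hj]
  refine (List.getElem?_eq_some_iff.mp (List.filter_take_length_getElem? hj ?_).2).1
  simpa [Act.isNonStoreB_iff] using hb

theorem traceOf_po_of_lt {i j : ℕ} {a b : Act Tid D}
    (hi : τ[i]? = some a) (hj : τ[j]? = some b) (ht : a.thread = b.thread) (ha : ¬ a.isStore)
    (hb : ¬ b.isStore) (hij : i < j) :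
    (traceOf τ).po (a.thread, rankAt τ i) (b.thread, rankAt τ j) :=
  ⟨ht, rankAt_lt_rankAt hi hj ht ha hij, rankAt_lt_length_threadNodes hj hb⟩

theorem SCshape.isNodePos_of_store (hB : StoresFollowIssues τ) (hS : SCshape τ)
    {j : ℕ} {t : Tid} {a v : D} {n : Tid × ℕ} (hj : τ[j]? = some (.store t a v))
    (hn : nodeAt τ j = some n) : ∃ i, j = i + 1 ∧ τ[i]? = some (.issue t) ∧ IsNodePos τ i n := by
  obtain ⟨i, rfl, hi, -, hios⟩ := hS.issue_before_store hB hj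
  refine ⟨i, rfl, hi, isNodePos_of_nodeAt hi (by simp [Act.isStore]) ?_⟩
  rw [← hn]
  simp only [nodeAt, hj, hios, Option.map_some, hi, Act.thread]

theorem SCshape.exists_isNodePos_of_labAt (hB : StoresFollowIssues τ) (hS : SCshape τ)
    {n : Tid × ℕ} {x : Act Tid D} (hlab : (traceOf τ).labAt n = some x) :
    ∃ q, IsNodePos τ q n ∧ (τ[q]? = some x ∨ τ[q + 1]? = some x ∧ x.isStore) := by
  obtain ⟨t, r⟩ := n
  set f : Act Tid D → Bool := fun a => a.isNonStoreB && decide (a.thread = t)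
  have hlab' : (mergeStores (τ.filter fun a => decide (a.thread = t))
      (τ.filter fun a => decide (isStoreOf t a)))[r]? = some x := hlab
  obtain ⟨y, hy, hcase⟩ := getElem?_mergeStores hlab'
  rw [List.filter_filter] at hy hcase
  obtain ⟨q, hq, hfy, hcnt⟩ := List.exists_getElem?_of_getElem?_filter hy
  simp only [Bool.and_eq_true, Act.isNonStoreB_iff, decide_eq_true_eq] at hfy
  have hrank : rankAt τ q = r := by rw [rankAt_eq_length_filter hq, hfy.2, hcnt]
  refine ⟨q, ⟨y, hq, hfy.1, hfy.2, hrank⟩, ?_⟩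
  rcases hcase with rfl | ⟨hyi, hs⟩
  · exact Or.inl hq
  obtain rfl : y = .issue t := by
    cases y <;> simp_all [Act.isIssue, Act.thread]
  obtain ⟨a, v, hst⟩ := hS q t hq
  obtain ⟨i, hi, -, hcntIS, -⟩ := hS.issue_before_store hB hst
  obtain rfl : q = i := by omega
  have hk : (((τ.filter f).take r).filter Act.isIssueB).length = cntP τ (isStoreOf t) (q + 1) := by
    rw [← hcnt, (List.filter_take_length_getElem? hq (f := f)
      (by simp [f, Act.isNonStoreB, Act.thread])).1, List.filter_filter, ← hcntIS]
    refine (cntP_eq_length_filter (fun a => ?_) q).symm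
    cases a <;> simp [f, Act.isIssueB, Act.isNonStoreB, isIssueOf, Act.isIssue, Act.thread]
    exact decide_eq_true_iff
  rw [hk,
    cntP_eq_length_filter (f := fun a => decide (isStoreOf t a)) (fun _ => decide_eq_true_iff),
    (List.filter_take_length_getElem? hst (by simp [isStoreOf, Act.isStore, Act.thread])).2] at hs
  cases hs
  exact Or.inr ⟨hst, trivial⟩

end Nodes

section SCAcyclic

variable {τ : List (Act Tid D)}

theorem SCshape.exists_of_srcRel (hB : StoresFollowIssues τ) (hS : SCshape τ) {m n : Tid × ℕ}
    (h : srcRel τ m n) :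
    ∃ p t a v j, τ[p]? = some (.load t a v) ∧ nodeAt τ p = some n ∧ j < p ∧
      (∃ t' v', τ[j]? = some (.store t' a v')) ∧
      (∀ j', j' < p → (∃ t' v', τ[j']? = some (.store t' a v')) → j' ≤ j) ∧
      nodeAt τ j = some m := by
  obtain ⟨p, t, a, v, hld, hn, ⟨i, hpend, -⟩ | ⟨-, j, hjp, hj, hmax, hm⟩⟩ := h
  · exact absurd hpend (hS.not_pendingIssue hB)
  · exact ⟨p, t, a, v, j, hld, hn, hjp, hj, hmax, hm⟩

theorem SCshape.exists_srcRel (hB : StoresFollowIssues τ) (hS : SCshape τ) {p j : ℕ} {t : Tid}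
    {a v : D} {n : Tid × ℕ} (hld : τ[p]? = some (.load t a v)) (hn : nodeAt τ p = some n)
    (hjp : j < p) (hj : ∃ t' v', τ[j]? = some (.store t' a v')) : ∃ m, srcRel τ m n := by
  let Q : ℕ → Prop := fun j₀ => ∃ t' v', τ[j₀]? = some (.store t' a v')
  have hlast : Q (Nat.findGreatest Q (p - 1)) := Nat.findGreatest_spec (by omega) hj
  obtain ⟨t₀, v₀, hj₀⟩ := hlast
  obtain ⟨i, -, -, -, hios⟩ := hS.issue_before_store hB hj₀
  refine ⟨(t₀, rankAt τ i), p, t, a, v, hld, hn, Or.inr ⟨fun ⟨_, hpend⟩ =>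
    hS.not_pendingIssue hB hpend, _, ?_, ⟨t₀, v₀, hj₀⟩, fun j' hj'p hj' => ?_, ?_⟩⟩
  · have := Nat.findGreatest_le (P := Q) (p - 1)
    omega
  · exact Nat.le_findGreatest (by omega) hj'
  · simp only [nodeAt, hj₀, hios, Option.map_some]

def NodeBefore (τ : List (Act Tid D)) (m n : Tid × ℕ) : Prop :=
  ∃ p q, IsNodePos τ p m ∧ IsNodePos τ q n ∧ p < q

theorem NodeBefore.trans {m n k : Tid × ℕ} (h₁ : NodeBefore τ m n) (h₂ : NodeBefore τ n k) :
    NodeBefore τ m k := by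
  obtain ⟨p, q, hp, hq, hpq⟩ := h₁
  obtain ⟨q', r, hq', hr, hqr⟩ := h₂
  exact ⟨p, r, hp, hr, hq.unique hq' ▸ hpq |>.trans hqr⟩

theorem NodeBefore.irrefl (n : Tid × ℕ) : ¬ NodeBefore τ n n := by
  rintro ⟨p, q, hp, hq, hpq⟩
  exact hpq.ne (hp.unique hq)

theorem nodeBefore_of_po {m n : Tid × ℕ} (h : (traceOf τ).po m n) : NodeBefore τ m n := by
  obtain ⟨t, r₁⟩ := m
  obtain ⟨t', r₂⟩ := n
  obtain ⟨rfl, hr, hlen⟩ := h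
  obtain ⟨q, hq⟩ := exists_isNodePos hlen
  obtain ⟨p, hp⟩ := exists_isNodePos (hr.trans hlen)
  exact ⟨p, q, hp, hq, hp.lt_of_rank_lt hq hr⟩

theorem SCshape.nodeBefore_of_soRel (hB : StoresFollowIssues τ) (hS : SCshape τ)
    {m n : Tid × ℕ} (h : soRel τ m n) : NodeBefore τ m n := by
  obtain ⟨i, j, a, hij, ⟨_, _, hi⟩, ⟨_, _, hj⟩, hm, hn⟩ := h
  obtain ⟨i', rfl, -, hi'⟩ := hS.isNodePos_of_store hB hi hm
  obtain ⟨j', rfl, -, hj'⟩ := hS.isNodePos_of_store hB hj hn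
  exact ⟨i', j', hi', hj', by omega⟩

theorem SCshape.nodeBefore_of_srcRel (hB : StoresFollowIssues τ) (hS : SCshape τ)
    {m n : Tid × ℕ} (h : srcRel τ m n) : NodeBefore τ m n := by
  obtain ⟨p, t, a, v, j, hld, hn, hjp, ⟨_, _, hj⟩, -, hm⟩ := hS.exists_of_srcRel hB h
  obtain ⟨j', rfl, -, hj'⟩ := hS.isNodePos_of_store hB hj hm
  exact ⟨j', p, hj', isNodePos_of_nodeAt hld (by simp [Act.isStore]) hn, by omega⟩

/-- A load precedes every store it conflicts with: either that store is `so`-after the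
load's source, which is the last store to the address before the load, or the load has
no source, so no store to its address precedes it. -/
theorem SCshape.nodeBefore_of_cf (hB : StoresFollowIssues τ) (hS : SCshape τ)
    {m n : Tid × ℕ} (h : (traceOf τ).cf m n) : NodeBefore τ m n := by
  obtain ⟨a, ⟨tm, vm, hlm⟩, ⟨tn, vn, hln⟩, hsrc⟩ := h
  obtain ⟨pm, hpm, hm⟩ := hS.exists_isNodePos_of_labAt hB hlm
  replace hm : τ[pm]? = some (.load tm a vm) := hm.resolve_right fun h => h.2
  obtain ⟨pn, hpn, hn⟩ := hS.exists_isNodePos_of_labAt hB hln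
  replace hn : τ[pn + 1]? = some (.store tn a vn) := by
    obtain ⟨_, h, hns, -⟩ := hpn
    exact (hn.resolve_left fun h' => hns (Option.some.inj (h.symm.trans h') ▸ trivial)).1
  obtain ⟨i, hi, hissue, -⟩ := hS.issue_before_store hB hn
  obtain rfl : pn = i := by omega
  have hafter : pm < pn + 1 := by
    by_contra! hle
    replace hle : pn + 1 < pm := hle.lt_of_ne fun h => by simp_all
    rcases hsrc with ⟨k, hk, hso⟩ | hnone
    · obtain ⟨pl, tl, al, vl, j, hld, hnl, hjpl, ⟨_, _, hj⟩, hmax, hkj⟩ := hS.exists_of_srcRel hB hk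
      obtain rfl := (isNodePos_of_nodeAt hld (by simp [Act.isStore]) hnl).unique hpm
      obtain rfl : al = a := by simp_all
      obtain ⟨i, i', a', hii', ⟨_, _, hi⟩, ⟨_, _, hi'⟩, hki, hni'⟩ := hso
      obtain ⟨_, rfl, -, hi₀⟩ := hS.isNodePos_of_store hB hi hki
      obtain ⟨_, rfl, -, hi'₀⟩ := hS.isNodePos_of_store hB hi' hni'
      obtain ⟨_, rfl, -, hj₀⟩ := hS.isNodePos_of_store hB hj hkj
      obtain rfl := hi'₀.unique hpn
      obtain rfl := hi₀.unique hj₀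
      have := hmax _ hle ⟨tn, vn, by simp_all⟩
      omega
    · exact hnone (hS.exists_srcRel hB hm hpm.nodeAt_eq hle ⟨tn, vn, hn⟩)
  exact ⟨pm, pn, hpm, hpn, (Nat.lt_succ_iff.mp hafter).lt_of_ne fun h => by simp_all⟩

theorem SCshape.nodeBefore_of_hb (hB : StoresFollowIssues τ) (hS : SCshape τ)
    {m n : Tid × ℕ} (h : (traceOf τ).hb m n) : NodeBefore τ m n := by
  rcases h with h | h | h | h
  · exact nodeBefore_of_po h
  · exact hS.nodeBefore_of_soRel hB h
  · exact hS.nodeBefore_of_srcRel hB h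
  · exact hS.nodeBefore_of_cf hB h

theorem SCshape.hb_acyclic (hB : StoresFollowIssues τ) (hS : SCshape τ) :
    Trace.Acyclic (traceOf τ).hb := by
  have key {m n : Tid × ℕ} (h : Relation.TransGen (traceOf τ).hb m n) : NodeBefore τ m n := by
    induction h using Relation.TransGen.trans_induction_on with
    | single h => exact hS.nodeBefore_of_hb hB h
    | trans _ _ h₁ h₂ => exact h₁.trans h₂
  exact fun ⟨n, h⟩ => NodeBefore.irrefl n (key h)

end SCAcyclic

theorem acyclic_of_mem_SCTraces [Zero D] {P : Program Tid Lbl D} {T : Trace Tid D}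
    (hT : T ∈ SCTraces P) : Trace.Acyclic T.hb := by
  obtain ⟨τ, ⟨⟨ρ, c, hrun, rfl, -⟩, hS⟩, rfl⟩ := hT
  exact hS.hb_acyclic hrun.storesFollowIssues

theorem not_robust_of_not_acyclic [Zero D] {P : Program Tid Lbl D} {τ : List (Act Tid D)}
    (hτ : TSOComput P τ) (hcyc : ¬ Trace.Acyclic (traceOf τ).hb) : ¬ Robust P := fun hrob =>
  hcyc (acyclic_of_mem_SCTraces (hrob ▸ ⟨τ, hτ, rfl⟩ : traceOf τ ∈ SCTraces P))

section WitnessWord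

variable (att : Tid) (τ₁ τ₂ τ₃ τ₄ : List (Act Tid D)) (aL vL aS vS : D)

theorem witnessWord_getElem?_issue :
    (witnessWord att τ₁ τ₂ τ₃ τ₄ aL vL aS vS)[τ₁.length]? = some (.issue att) := by
  simp [witnessWord]

theorem witnessWord_getElem?_load :
    (witnessWord att τ₁ τ₂ τ₃ τ₄ aL vL aS vS)[τ₁.length + 1 + τ₂.length]? =
      some (.load att aL vL) := by
  rw [witnessWord, List.getElem?_append_right (by omega), Nat.add_assoc, Nat.add_sub_cancel_left,
    Nat.add_comm, List.getElem?_cons_succ, List.getElem?_append_right le_rfl]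
  simp

theorem witnessWord_getElem?_store :
    (witnessWord att τ₁ τ₂ τ₃ τ₄ aL vL aS vS)[τ₁.length + 1 + τ₂.length + 1 + τ₃.length]? =
      some (.store att aS vS) := by
  rw [witnessWord, List.getElem?_append_right (by omega),
    show τ₁.length + 1 + τ₂.length + 1 + τ₃.length - τ₁.length = τ₂.length + 1 + τ₃.length + 1
      by omega,
    List.getElem?_cons_succ, List.getElem?_append_right (by omega),
    show τ₂.length + 1 + τ₃.length - τ₂.length = τ₃.length + 1 by omega,
    List.getElem?_cons_succ, List.getElem?_append_right le_rfl]
  simp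

end WitnessWord

/-- If `τ` is a TSO witness for an attack
`A = (attacker, stinst, ldinst)` in a parallel program `P`, with delayed store
action `st` and load action `ld` as in the witness shape, then the trace
`Tr(τ)` contains the happens-before cycle `st po⁺ ld hb⁺ st`; consequently
`P` is not robust. -/
theorem witness_gives_cycle_and_nonrobustness {Tid Lbl D : Type} [Zero D]
    (P : Program Tid Lbl D) (A : Attack Tid Lbl D)
    (τ₁ τ₂ τ₃ τ₄ : List (Act Tid D)) (aL vL aS vS : D)
    (hw : WitnessShape P A τ₁ τ₂ τ₃ τ₄ aL vL aS vS) :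
    (let τ := witnessWord A.attacker τ₁ τ₂ τ₃ τ₄ aL vL aS vS
     let pLd := τ₁.length + 1 + τ₂.length
     let pSt := τ₁.length + 1 + τ₂.length + 1 + τ₃.length
     ∃ nSt nLd, nodeAt τ pSt = some nSt ∧ nodeAt τ pLd = some nLd ∧
       Relation.TransGen (traceOf τ).po nSt nLd ∧
       Relation.TransGen (traceOf τ).hb nLd nSt) ∧
    ¬ Robust P := by
  obtain ⟨-, -, ⟨ρ, c, hrun, hacts, hbuf, -⟩, hios, -, -, -, -, hW3, -⟩ := hw
  have hIsu := witnessWord_getElem?_issue A.attacker τ₁ τ₂ τ₃ τ₄ aL vL aS vS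
  have hLd := witnessWord_getElem?_load A.attacker τ₁ τ₂ τ₃ τ₄ aL vL aS vS
  have hSt := witnessWord_getElem?_store A.attacker τ₁ τ₂ τ₃ τ₄ aL vL aS vS
  set τ := witnessWord A.attacker τ₁ τ₂ τ₃ τ₄ aL vL aS vS
  have hnSt : nodeAt τ (τ₁.length + 1 + τ₂.length + 1 + τ₃.length) =
      some (A.attacker, rankAt τ τ₁.length) := by
    simp only [nodeAt, hSt, hios, Option.map_some]
  have hnLd := nodeAt_of_not_isStore hLd (by simp [Act.isStore])
  have hpo := traceOf_po_of_lt hIsu hLd rfl (by simp [Act.isStore]) (by simp [Act.isStore])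
    (by omega)
  obtain ⟨m, n, hm, hn, hhb⟩ := hW3 _ (by omega) le_rfl
  rw [hnLd, Option.some.injEq] at hm
  rw [hnSt, Option.some.injEq] at hn
  subst hm hn
  exact ⟨⟨_, _, hnSt, hnLd, .single hpo, hhb⟩,
    not_robust_of_not_acyclic ⟨ρ, c, hrun, hacts, hbuf⟩ fun hac => hac ⟨_, .head (Or.inl hpo) hhb⟩⟩

end

end TSORob
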